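/- arXiv:1207.6200 — 2 statements merged into one kernel-verified Lean document; each statement's English description precedes it below -/
import Mathlib

section
/- Conditional controllability together with conditional decomposability of the prefix closure implies controllability: let G = G₁ ∥ G₂ ∥ G_k be the global plant over E = E₁∪E₂∪E_k, and K ⊆ L_m(G) a language such that \overline{K} = \overline{P_{1+k}(K)} ∥ \overline{P_{2+k}(K)} (conditional decomposability of \overline{K}), P_k(K) is controllable w.r.t. L(G_k) and E_{k,u}, and P_{i+k}(K) is controllable w.r.t. L(G_i) ∥ \overline{P_k(K)} and E_{i+k,u} for i = 1,2. Then K is controllable with respect to L(G) and E_u. -/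
/-!
Let `s ∈ prefixCl K` and let `u` be uncontrollable with `s u ∈ L(G)`. By conditional
decomposability it suffices to show `P_{i+k}(s u) ∈ prefixCl (P_{i+k} K)` for `i = 1, 2`.
Controllability of `P_k K` puts `P_k(s u)` into `prefixCl (P_k K)`, so `P_{i+k}(s u)` lies in
`L(G_i) ∥ prefixCl (P_k K)`, and controllability of `P_{i+k} K` concludes. In either step, if
`u` lies outside the projected alphabet the projection of `s u` is that of `s`, already a prefix.
-/

open scoped Classical

/-- Natural projection: erase letters not in `A`. -/
noncomputable def proj {Ev : Type*} (A : Set Ev) (w : List Ev) : List Ev :=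
  w.filter (fun a => decide (a ∈ A))

/-- Projection of a language. -/
noncomputable def projL {Ev : Type*} (A : Set Ev) (L : Set (List Ev)) : Set (List Ev) :=
  proj A '' L

/-- Words over an alphabet `A`, i.e., `A*`. -/
def star {Ev : Type*} (A : Set Ev) : Set (List Ev) := {w | ∀ a ∈ w, a ∈ A}

/-- Synchronous product of `L₁ ⊆ A*` and `L₂ ⊆ B*`. -/
noncomputable def sync {Ev : Type*} (A B : Set Ev) (L1 L2 : Set (List Ev)) :
    Set (List Ev) :=
  {w | w ∈ star (A ∪ B) ∧ proj A w ∈ L1 ∧ proj B w ∈ L2}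

/-- Prefix closure of a language. -/
def prefixCl {Ev : Type*} (L : Set (List Ev)) : Set (List Ev) := {w | ∃ v, w ++ v ∈ L}

/-- Controllability of `K` with respect to (prefix-closed) `L` and uncontrollable events `Eu`. -/
def controllable {Ev : Type*} (K L : Set (List Ev)) (Eu : Set Ev) : Prop :=
  ∀ s ∈ prefixCl K, ∀ u ∈ Eu, s ++ [u] ∈ L → s ++ [u] ∈ prefixCl K

/-- Supremal controllable sublanguage of `K` w.r.t. `N` and `U`. -/
noncomputable def supC {Ev : Type*} (K N : Set (List Ev)) (U : Set Ev) : Set (List Ev) :=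
  ⋃₀ {M | M ⊆ K ∧ controllable M N U}

/-- `proj A` is an `L`-observer. -/
def observer {Ev : Type*} (A : Set Ev) (L : Set (List Ev)) : Prop :=
  ∀ t ∈ projL A L, ∀ s ∈ prefixCl L, proj A s <+: t →
    ∃ u, s ++ u ∈ L ∧ proj A (s ++ u) = t

/-- `proj A` is locally control consistent (LCC) for `L` (w.r.t. uncontrollable events `Eu`). -/
def lcc {Ev : Type*} (A Eu : Set Ev) (L : Set (List Ev)) : Prop :=
  ∀ s ∈ L, ∀ σ ∈ A ∩ Eu, proj A s ++ [σ] ∈ projL A L →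
    (∃ u, (∀ a ∈ u, a ∉ A) ∧ s ++ u ++ [σ] ∈ L) →
    ∃ u, (∀ a ∈ u, a ∈ Eu ∧ a ∉ A) ∧ s ++ u ++ [σ] ∈ L

section Languages

variable {Ev : Type*}

lemma proj_append (A : Set Ev) (w v : List Ev) :
    proj A (w ++ v) = proj A w ++ proj A v :=
  List.filter_append ..

lemma proj_proj_of_subset {A B : Set Ev} (h : A ⊆ B) (w : List Ev) :
    proj A (proj B w) = proj A w := by
  unfold proj
  rw [List.filter_filter]
  congr 1
  funext a
  by_cases ha : a ∈ A <;> simp [ha, fun hh => h hh]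

lemma proj_mem_star (A : Set Ev) (w : List Ev) : proj A w ∈ star A := by
  intro a ha
  simp only [proj, List.mem_filter, decide_eq_true_eq] at ha
  exact ha.2

lemma proj_append_singleton_of_mem {A : Set Ev} {u : Ev} (hu : u ∈ A) (s : List Ev) :
    proj A (s ++ [u]) = proj A s ++ [u] := by
  simp [proj, hu]

lemma proj_append_singleton_of_not_mem {A : Set Ev} {u : Ev} (hu : u ∉ A) (s : List Ev) :
    proj A (s ++ [u]) = proj A s := by
  simp [proj, hu]

lemma proj_mem_prefixCl_projL (A : Set Ev) {K : Set (List Ev)} {s : List Ev}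
    (hs : s ∈ prefixCl K) : proj A s ∈ prefixCl (projL A K) := by
  obtain ⟨v, hv⟩ := hs
  exact ⟨proj A v, s ++ v, hv, proj_append A s v⟩

lemma proj_union_mem_sync {A B : Set Ev} {L₁ L₂ : Set (List Ev)} {w : List Ev}
    (h₁ : proj A w ∈ L₁) (h₂ : proj B w ∈ L₂) : proj (A ∪ B) w ∈ sync A B L₁ L₂ := by
  refine ⟨proj_mem_star _ _, ?_, ?_⟩
  · rwa [proj_proj_of_subset Set.subset_union_left]
  · rwa [proj_proj_of_subset Set.subset_union_right]

lemma star_mono {A B : Set Ev} (h : A ⊆ B) : star A ⊆ star B :=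
  fun _ hw a ha => h (hw a ha)

lemma proj_append_singleton_mem_prefixCl_of_controllable {A U : Set Ev}
    {K L : Set (List Ev)} (hc : controllable (projL A K) L (A ∩ U))
    {s : List Ev} (hs : s ∈ prefixCl K) {u : Ev} (hu : u ∈ U)
    (hL : proj A (s ++ [u]) ∈ L) : proj A (s ++ [u]) ∈ prefixCl (projL A K) := by
  by_cases huA : u ∈ A
  · rw [proj_append_singleton_of_mem huA] at hL ⊢
    exact hc _ (proj_mem_prefixCl_projL A hs) u ⟨huA, hu⟩ hL
  · rw [proj_append_singleton_of_not_mem huA]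
    exact proj_mem_prefixCl_projL A hs

lemma proj_union_append_singleton_mem_prefixCl_of_conditionallyControllable
    {Ei Ek U : Set Ev} {LGi LGk K : Set (List Ev)}
    (hck : controllable (projL Ek K) LGk (Ek ∩ U))
    (hc : controllable (projL (Ei ∪ Ek) K)
      (sync Ei Ek LGi (prefixCl (projL Ek K))) ((Ei ∪ Ek) ∩ U))
    {s : List Ev} (hs : s ∈ prefixCl K) {u : Ev} (hu : u ∈ U)
    (hi : proj Ei (s ++ [u]) ∈ LGi) (hk : proj Ek (s ++ [u]) ∈ LGk) :
    proj (Ei ∪ Ek) (s ++ [u]) ∈ prefixCl (projL (Ei ∪ Ek) K) :=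
  proj_append_singleton_mem_prefixCl_of_controllable hc hs hu <| proj_union_mem_sync hi <|
    proj_append_singleton_mem_prefixCl_of_controllable hck hs hu hk

end Languages

theorem stmt6_general {Ev : Type*} (E1 E2 Ek Eu : Set Ev) (LG1 LG2 LGk K : Set (List Ev))
    (hcd : prefixCl K =
      sync (E1 ∪ Ek) (E2 ∪ Ek) (prefixCl (projL (E1 ∪ Ek) K)) (prefixCl (projL (E2 ∪ Ek) K)))
    (hck : controllable (projL Ek K) LGk (Ek ∩ Eu))
    (hc1 : controllable (projL (E1 ∪ Ek) K)
      (sync E1 Ek LG1 (prefixCl (projL Ek K))) ((E1 ∪ Ek) ∩ Eu))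
    (hc2 : controllable (projL (E2 ∪ Ek) K)
      (sync E2 Ek LG2 (prefixCl (projL Ek K))) ((E2 ∪ Ek) ∩ Eu)) :
    controllable K (sync E1 (E2 ∪ Ek) LG1 (sync E2 Ek LG2 LGk)) Eu := by
  rintro s hs u hu ⟨hstar, h1, -, h2, hk⟩
  rw [proj_proj_of_subset Set.subset_union_left] at h2
  rw [proj_proj_of_subset Set.subset_union_right] at hk
  rw [hcd]
  refine ⟨star_mono (by grind) hstar, ?_, ?_⟩
  · exact proj_union_append_singleton_mem_prefixCl_of_conditionallyControllable hck hc1 hs hu h1 hk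
  · exact proj_union_append_singleton_mem_prefixCl_of_conditionallyControllable hck hc2 hs hu h2 hk

/-- conditional controllability together with conditional decomposability
of the prefix closure implies controllability w.r.t. the global plant. -/
theorem stmt6 {Ev : Type*} (E1 E2 Ek Eu : Set Ev) (LG1 LG2 LGk K : Set (List Ev))
    (hLG1 : LG1 ⊆ star E1) (hLG2 : LG2 ⊆ star E2) (hLGk : LGk ⊆ star Ek)
    (hLG1c : prefixCl LG1 = LG1) (hLG2c : prefixCl LG2 = LG2) (hLGkc : prefixCl LGk = LGk)
    (hK : K ⊆ sync E1 (E2 ∪ Ek) LG1 (sync E2 Ek LG2 LGk))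
    (hcd : prefixCl K =
      sync (E1 ∪ Ek) (E2 ∪ Ek) (prefixCl (projL (E1 ∪ Ek) K)) (prefixCl (projL (E2 ∪ Ek) K)))
    (hsub : prefixCl (projL Ek K) ⊆ LGk)
    (hck : controllable (projL Ek K) LGk (Ek ∩ Eu))
    (hc1 : controllable (projL (E1 ∪ Ek) K)
      (sync E1 Ek LG1 (prefixCl (projL Ek K))) ((E1 ∪ Ek) ∩ Eu))
    (hc2 : controllable (projL (E2 ∪ Ek) K)
      (sync E2 Ek LG2 (prefixCl (projL Ek K))) ((E2 ∪ Ek) ∩ Eu)) :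
    controllable K (sync E1 (E2 ∪ Ek) LG1 (sync E2 Ek LG2 LGk)) Eu :=
  stmt6_general E1 E2 Ek Eu LG1 LG2 LGk K hcd hck hc1 hc2
end

section
/- If K is conditionally decomposable with respect to E₁, E₂, E_k and L = L₁ ∥ L₂ ∥ L_k with L_i ⊆ E_i* for i ∈ {1,2,k}, then K ∥ L is conditionally decomposable with respect to E₁, E₂, E_k, i.e., K ∥ L = P_{1+k}(K ∥ L) ∥ P_{2+k}(K ∥ L). -/
open scoped Classical

/-
Membership of a word `w ∈ (E₁ ∪ E₂ ∪ E_k)*` in `L = L₁ ∥ (L₂ ∥ L_k)` is decided by its projections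
to `E₁ ⊆ E₁ ∪ E_k` and to `E₂ ∪ E_k`, and by hypothesis so is membership in `K`. Hence if the two
projections of `w` are those of words `s, t ∈ K ∥ L`, then `w ∈ K ∥ L`.
-/

section

variable {Ev : Type*}

def CondDecomposable (A B : Set Ev) (K : Set (List Ev)) : Prop :=
  K = sync A B (projL A K) (projL B K)

lemma proj_eq_self {A : Set Ev} {w : List Ev} (h : w ∈ star A) : proj A w = w :=
  List.filter_eq_self.2 fun a ha => by simpa using h a ha

lemma proj_proj {A B : Set Ev} (hBA : B ⊆ A) (w : List Ev) :
    proj B (proj A w) = proj B w := by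
  unfold proj
  rw [List.filter_filter]
  refine List.filter_congr fun a _ => ?_
  by_cases h : a ∈ B
  · simp [h, hBA h]
  · simp [h]

lemma mem_of_mem_proj {A : Set Ev} {w : List Ev} {a : Ev} (ha : a ∈ proj A w) : a ∈ w :=
  List.mem_of_mem_filter ha

lemma mem_proj_of_mem {A : Set Ev} {w : List Ev} {a : Ev} (hw : a ∈ w) (hA : a ∈ A) :
    a ∈ proj A w :=
  List.mem_filter.2 ⟨hw, by simpa using hA⟩

lemma sync_subset_star (A B : Set Ev) (L1 L2 : Set (List Ev)) :
    sync A B L1 L2 ⊆ star (A ∪ B) :=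
  fun _ hw => hw.1

lemma sync_self_of_subset {A : Set Ev} {L1 : Set (List Ev)} (h : L1 ⊆ star A)
    (L2 : Set (List Ev)) : sync A A L1 L2 = L1 ∩ L2 := by
  ext w
  constructor
  · rintro ⟨hw, h1, h2⟩
    rw [Set.union_self, proj_eq_self hw] at *
    exact ⟨h1, h2⟩
  · rintro ⟨h1, h2⟩
    have hw := h h1
    exact ⟨by rwa [Set.union_self], by rwa [proj_eq_self hw], by rwa [proj_eq_self hw]⟩

lemma subset_sync_projL {A B : Set Ev} {L : Set (List Ev)} (h : L ⊆ star (A ∪ B)) :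
    L ⊆ sync A B (projL A L) (projL B L) :=
  fun w hw => ⟨h hw, ⟨w, hw, rfl⟩, ⟨w, hw, rfl⟩⟩

lemma mem_star_of_proj_eq {A B X : Set Ev} {w s t : List Ev} (hw : w ∈ star (A ∪ B))
    (hs : proj A w = proj A s) (ht : proj B w = proj B t) (hsX : s ∈ star X)
    (htX : t ∈ star X) : w ∈ star X := by
  intro a ha
  rcases hw a ha with hA | hB
  · exact hsX a (mem_of_mem_proj (hs ▸ mem_proj_of_mem ha hA))
  · exact htX a (mem_of_mem_proj (ht ▸ mem_proj_of_mem ha hB))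

lemma mem_sync_of_proj_eq {A B C D : Set Ev} {N1 N2 : Set (List Ev)} (hCA : C ⊆ A)
    (hDB : D ⊆ B) {w s t : List Ev} (hw : w ∈ star (A ∪ B)) (hs : proj A w = proj A s)
    (ht : proj B w = proj B t) (hsN : s ∈ sync C D N1 N2) (htN : t ∈ sync C D N1 N2) :
    w ∈ sync C D N1 N2 := by
  refine ⟨mem_star_of_proj_eq hw hs ht hsN.1 htN.1, ?_, ?_⟩
  · rw [← proj_proj hCA, hs, proj_proj hCA]
    exact hsN.2.1
  · rw [← proj_proj hDB, ht, proj_proj hDB]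
    exact htN.2.2

theorem CondDecomposable.subset_star {A B : Set Ev} {K : Set (List Ev)}
    (hK : CondDecomposable A B K) : K ⊆ star (A ∪ B) := by
  rw [hK]
  exact sync_subset_star _ _ _ _

theorem CondDecomposable.inter_sync {A B C D : Set Ev} {K : Set (List Ev)}
    (hK : CondDecomposable A B K) (hCA : C ⊆ A) (hDB : D ⊆ B) (N1 N2 : Set (List Ev)) :
    CondDecomposable A B (K ∩ sync C D N1 N2) := by
  refine subset_antisymm
    (subset_sync_projL (Set.inter_subset_left.trans hK.subset_star)) ?_
  rintro w ⟨hw, ⟨s, ⟨hsK, hsN⟩, hs⟩, ⟨t, ⟨htK, htN⟩, ht⟩⟩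
  have hwK : w ∈ K := by
    rw [hK]
    exact ⟨hw, ⟨s, hsK, hs⟩, ⟨t, htK, ht⟩⟩
  exact ⟨hwK, mem_sync_of_proj_eq hCA hDB hw hs.symm ht.symm hsN htN⟩

end

theorem stmt13_general {Ev : Type*} (E1 E2 Ek : Set Ev) (K L1 L2 Lk : Set (List Ev))
    (hcd : K = sync (E1 ∪ Ek) (E2 ∪ Ek) (projL (E1 ∪ Ek) K) (projL (E2 ∪ Ek) K)) :
    sync (E1 ∪ E2 ∪ Ek) (E1 ∪ E2 ∪ Ek) K (sync E1 (E2 ∪ Ek) L1 (sync E2 Ek L2 Lk)) =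
      sync (E1 ∪ Ek) (E2 ∪ Ek)
        (projL (E1 ∪ Ek)
          (sync (E1 ∪ E2 ∪ Ek) (E1 ∪ E2 ∪ Ek) K (sync E1 (E2 ∪ Ek) L1 (sync E2 Ek L2 Lk))))
        (projL (E2 ∪ Ek)
          (sync (E1 ∪ E2 ∪ Ek) (E1 ∪ E2 ∪ Ek) K (sync E1 (E2 ∪ Ek) L1 (sync E2 Ek L2 Lk)))) := by
  have hK : CondDecomposable (E1 ∪ Ek) (E2 ∪ Ek) K := hcd
  have hE : (E1 ∪ Ek) ∪ (E2 ∪ Ek) = E1 ∪ E2 ∪ Ek := by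
    ext a
    simp only [Set.mem_union]
    tauto
  have hKstar : K ⊆ star (E1 ∪ E2 ∪ Ek) := hE ▸ hK.subset_star
  rw [sync_self_of_subset hKstar]
  exact hK.inter_sync Set.subset_union_left subset_rfl L1 _

/-- if K is conditionally decomposable and L = L1 || L2 || Lk, then
K || L is conditionally decomposable. -/
theorem stmt13 {Ev : Type*} (E1 E2 Ek : Set Ev) (K L1 L2 Lk : Set (List Ev))
    (hK : K ⊆ star (E1 ∪ E2 ∪ Ek))
    (hL1 : L1 ⊆ star E1) (hL2 : L2 ⊆ star E2) (hLk : Lk ⊆ star Ek)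
    (hcd : K = sync (E1 ∪ Ek) (E2 ∪ Ek) (projL (E1 ∪ Ek) K) (projL (E2 ∪ Ek) K)) :
    sync (E1 ∪ E2 ∪ Ek) (E1 ∪ E2 ∪ Ek) K (sync E1 (E2 ∪ Ek) L1 (sync E2 Ek L2 Lk)) =
      sync (E1 ∪ Ek) (E2 ∪ Ek)
        (projL (E1 ∪ Ek)
          (sync (E1 ∪ E2 ∪ Ek) (E1 ∪ E2 ∪ Ek) K (sync E1 (E2 ∪ Ek) L1 (sync E2 Ek L2 Lk))))
        (projL (E2 ∪ Ek)
          (sync (E1 ∪ E2 ∪ Ek) (E1 ∪ E2 ∪ Ek) K (sync E1 (E2 ∪ Ek) L1 (sync E2 Ek L2 Lk)))) :=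
  stmt13_general E1 E2 Ek K L1 L2 Lk hcd
end
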